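/- arXiv:1905.13583 — 2 statements merged into one kernel-verified Lean document; each statement's English description precedes it below -/
import Mathlib

section
/- If X is an infinite-dimensional Archimedean vector lattice, then there exists a net in X that is uo-convergent to 0 (uo-null) but is not eventually order bounded in X. -/
/-- A net `x : ι → X` (indexed by a preordered set `ι`) *order converges* (`o`-converges)
to `l ∈ X` if there is a net `y : Γ → X` over a nonempty directed set `Γ` which decreases
to `0` (i.e. `y` is antitone and `inf_γ y γ = 0`) such that for every `γ` there is an index
`α₀` with `|x α - l| ≤ y γ` for all `α ≥ α₀`. -/
def OConvergesTo {X : Type u} [Lattice X] [AddCommGroup X]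
    {ι : Type v} [Preorder ι] (x : ι → X) (l : X) : Prop :=
  ∃ (Γ : Type u) (_ : Preorder Γ) (_ : Nonempty Γ),
    IsDirected Γ (· ≤ ·) ∧
    ∃ y : Γ → X, Antitone y ∧ IsGLB (Set.range y) 0 ∧
      ∀ γ : Γ, ∃ α₀ : ι, ∀ α : ι, α₀ ≤ α → |x α - l| ≤ y γ

/-- A net `x : ι → X` is *unbounded order convergent* (`uo`-convergent) to `l ∈ X` if
`|x α - l| ⊓ y` order converges to `0` for every `y ≥ 0`. -/
def UOConvergesTo {X : Type u} [Lattice X] [AddCommGroup X]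
    {ι : Type v} [Preorder ι] (x : ι → X) (l : X) : Prop :=
  ∀ y : X, 0 ≤ y → OConvergesTo (fun α => |x α - l| ⊓ y) (0 : X)

/-- A net `x : ι → X` is *eventually order bounded* if there are `α₀ ∈ ι` and `b ∈ X`
with `|x α| ≤ b` for all `α ≥ α₀`. -/
def EventuallyOrderBounded {X : Type u} [Lattice X] [AddCommGroup X]
    {ι : Type v} [Preorder ι] (x : ι → X) : Prop :=
  ∃ (α₀ : ι) (b : X), ∀ α : ι, α₀ ≤ α → |x α| ≤ b

/-- A vector lattice is *Archimedean* if `n • x ≤ y` for all `n : ℕ` implies `x ≤ 0`. -/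
def ArchimedeanVL (X : Type u) [Lattice X] [AddCommGroup X] : Prop :=
  ∀ x y : X, (∀ n : ℕ, n • x ≤ y) → x ≤ 0

/-!
If `X` contains a sequence `d` of pairwise disjoint positive elements, take the net
`(k, n) ↦ n • d k` on `ℕ × ℕ`. It is not eventually order bounded because `X` is Archimedean.
For `y ≥ 0` the elements `(n • d k) ⊓ y` lie below `y` and are disjoint for different `k`, which
forces the upper bounds of their tails to decrease to `0`.

If `X` has no such sequence, splitting repeatedly shows that every positive element dominates an
atom. By the Archimedean property everything between `0` and an atom `e` is a multiple of `e`.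
A maximal disjoint family of atoms is finite, and subtracting from `x ≥ 0` the largest multiples
of the atoms that fit below `x` leaves an element disjoint from all of them, hence `0`. So the
atoms span `X`, which is finite-dimensional.
-/

section LatticeGroup

variable {X : Type*} [AddCommGroup X] [Lattice X]

def IsRieszAtom (e : X) : Prop :=
  0 < e ∧ ∀ a b : X, 0 ≤ a → 0 ≤ b → a ≤ e → b ≤ e → a ⊓ b = 0 → a = 0 ∨ b = 0

/-- Repeatedly split off a piece of what is left of `x`. -/
lemma exists_pairwise_inf_eq_zero_of_forall_not_isRieszAtom {x : X} (hx : 0 < x)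
    (h : ∀ e, 0 < e → e ≤ x → ¬ IsRieszAtom e) :
    ∃ d : ℕ → X, (∀ k, 0 < d k) ∧ Pairwise fun i j => d i ⊓ d j = 0 := by
  let T := {e : X // 0 < e ∧ e ≤ x}
  have split (e : T) : ∃ a b : T, a.1 ≤ e.1 ∧ b.1 ≤ e.1 ∧ a.1 ⊓ b.1 = 0 := by
    obtain ⟨a, b, ha, hb, hae, hbe, hab, ha0, hb0⟩ : ∃ a b : X, 0 ≤ a ∧ 0 ≤ b ∧ a ≤ e.1 ∧
        b ≤ e.1 ∧ a ⊓ b = 0 ∧ a ≠ 0 ∧ b ≠ 0 := by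
      simpa [IsRieszAtom, e.2.1, not_or] using h e.1 e.2.1 e.2.2
    exact ⟨⟨a, ha.lt_of_ne' ha0, hae.trans e.2.2⟩, ⟨b, hb.lt_of_ne' hb0, hbe.trans e.2.2⟩,
      hae, hbe, hab⟩
  choose piece rest hpiece hrest hdisj using split
  let E (k : ℕ) : T := rest^[k] ⟨x, hx, le_rfl⟩
  have hE : Antitone fun k => (E k).1 := antitone_nat_of_succ_le fun k => by
    simpa only [E, Function.iterate_succ_apply'] using hrest (E k)
  have hlt {i j : ℕ} (hij : i < j) : (piece (E i)).1 ⊓ (piece (E j)).1 = 0 := by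
    have hj : (piece (E j)).1 ≤ (rest (E i)).1 := by
      simpa only [E, Function.iterate_succ_apply'] using
        (hpiece (E j)).trans (hE (Nat.succ_le_of_lt hij))
    refine le_antisymm ?_ (le_inf (piece _).2.1.le (piece _).2.1.le)
    exact (hdisj (E i)).le.trans' (inf_le_inf_left _ hj)
  refine ⟨fun k => (piece (E k)).1, fun k => (piece (E k)).2.1, fun i j hij => ?_⟩
  rcases hij.lt_or_gt with hij | hij
  · exact hlt hij
  · rw [inf_comm]
    exact hlt hij

variable [IsOrderedAddMonoid X]

lemma add_eq_sup_of_inf_eq_zero {a b : X} (h : a ⊓ b = 0) : a + b = a ⊔ b := by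
  rw [← inf_add_sup a b, h, zero_add]

lemma add_inf_eq_zero {a b c : X} (ha : 0 ≤ a) (hb : 0 ≤ b) (hc : 0 ≤ c)
    (hac : a ⊓ c = 0) (hbc : b ⊓ c = 0) : (a + b) ⊓ c = 0 := by
  set z := (a + b) ⊓ c
  have hza : z - a ≤ 0 := hbc ▸ le_inf (sub_le_iff_le_add'.2 inf_le_left)
    ((sub_le_self _ ha).trans inf_le_right)
  have hz : z ≤ 0 := hac ▸ le_inf (sub_nonpos.1 hza) inf_le_right
  exact le_antisymm hz (le_inf (add_nonneg ha hb) hc)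

lemma Finset.sum_inf_eq_zero {ι : Type*} {s : Finset ι} {g : ι → X} {c : X} (hc : 0 ≤ c)
    (hg : ∀ i ∈ s, 0 ≤ g i) (hgc : ∀ i ∈ s, g i ⊓ c = 0) : (∑ i ∈ s, g i) ⊓ c = 0 := by
  classical
  induction s using Finset.induction with
  | empty => simpa using hc
  | insert a s ha ih =>
    simp only [Finset.mem_insert, forall_eq_or_imp] at hg hgc
    rw [Finset.sum_insert ha]
    exact add_inf_eq_zero hg.1 (Finset.sum_nonneg hg.2) hc hgc.1 (ih hg.2 hgc.2)

lemma Finset.sum_le_of_pairwise_inf_eq_zero {ι : Type*} {s : Finset ι} {g : ι → X} {x : X}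
    (hx : 0 ≤ x) (hg : ∀ i ∈ s, 0 ≤ g i) (hgx : ∀ i ∈ s, g i ≤ x)
    (hdisj : (s : Set ι).Pairwise fun i j => g i ⊓ g j = 0) : ∑ i ∈ s, g i ≤ x := by
  classical
  induction s using Finset.induction with
  | empty => simpa using hx
  | insert a s ha ih =>
    rw [Finset.coe_insert, Set.pairwise_insert] at hdisj
    simp only [Finset.mem_insert, forall_eq_or_imp] at hg hgx
    have hsum : g a ⊓ ∑ i ∈ s, g i = 0 := by
      rw [inf_comm]
      refine Finset.sum_inf_eq_zero hg.1 hg.2 fun i hi => (hdisj.2 i hi ?_).2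
      rintro rfl
      exact ha hi
    rw [Finset.sum_insert ha, add_eq_sup_of_inf_eq_zero hsum]
    exact sup_le hgx.1 (ih hg.2 hgx.2 hdisj.1)

variable [Module ℝ X] [PosSMulMono ℝ X]

lemma smul_inf_smul_eq_zero {a b : X} (ha : 0 ≤ a) (hb : 0 ≤ b) (hab : a ⊓ b = 0) {s t : ℝ}
    (hs : 0 ≤ s) (ht : 0 ≤ t) : s • a ⊓ t • b = 0 := by
  have hm : 0 < s + t + 1 := by positivity
  refine le_antisymm ?_ (le_inf (smul_nonneg hs ha) (smul_nonneg ht hb))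
  calc s • a ⊓ t • b ≤ (s + t + 1) • a ⊓ (s + t + 1) • b :=
        inf_le_inf (smul_le_smul_of_nonneg_right (by linarith) ha)
          (smul_le_smul_of_nonneg_right (by linarith) hb)
    _ = (s + t + 1) • (a ⊓ b) := ((OrderIso.smulRight hm).map_inf a b).symm
    _ = 0 := by rw [hab, smul_zero]

namespace IsRieszAtom

variable {e : X}

lemma eq_zero_or_eq_zero_of_le_smul (he : IsRieszAtom e) {a b : X} (ha : 0 ≤ a) (hb : 0 ≤ b)
    (hab : a ⊓ b = 0) {M : ℝ} (hM : 0 < M) (haM : a ≤ M • e) (hbM : b ≤ M • e) :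
    a = 0 ∨ b = 0 := by
  have hM' : M⁻¹ ≠ 0 := inv_ne_zero hM.ne'
  refine (he.2 (M⁻¹ • a) (M⁻¹ • b) (smul_nonneg (inv_nonneg.2 hM.le) ha)
    (smul_nonneg (inv_nonneg.2 hM.le) hb) ((inv_smul_le_iff_of_pos hM).2 haM)
    ((inv_smul_le_iff_of_pos hM).2 hbM)
    (smul_inf_smul_eq_zero ha hb hab (inv_nonneg.2 hM.le) (inv_nonneg.2 hM.le))).imp ?_ ?_
  · exact (smul_eq_zero_iff_right hM').1
  · exact (smul_eq_zero_iff_right hM').1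

lemma nonneg_or_nonpos_of_abs_le (he : IsRieszAtom e) {v : X} {M : ℝ} (hM : 0 < M)
    (hv : |v| ≤ M • e) : 0 ≤ v ∨ v ≤ 0 := by
  have hpos : v⁺ ≤ |v| := posPart_add_negPart v ▸ le_add_of_nonneg_right (negPart_nonneg v)
  have hneg : v⁻ ≤ |v| := posPart_add_negPart v ▸ le_add_of_nonneg_left (posPart_nonneg v)
  refine (he.eq_zero_or_eq_zero_of_le_smul (posPart_nonneg v) (negPart_nonneg v)
    (posPart_inf_negPart_eq_zero v) hM (hpos.trans hv) (hneg.trans hv)).symm.imp ?_ ?_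
  · exact negPart_eq_zero.1
  · exact posPart_eq_zero.1

end IsRieszAtom

end LatticeGroup

namespace ArchimedeanVL

variable {X : Type*} [AddCommGroup X] [Lattice X] [IsOrderedAddMonoid X] [Module ℝ X]
  [PosSMulMono ℝ X]

lemma le_zero_of_forall_le_smul (hX : ArchimedeanVL X) {v e : X}
    (h : ∀ ε : ℝ, 0 < ε → v ≤ ε • e) : v ≤ 0 := by
  refine hX v |e| fun n => ?_
  rcases n.eq_zero_or_pos with rfl | hn
  · simp
  · have hn' : (0 : ℝ) < n := Nat.cast_pos.2 hn
    calc n • v = (n : ℝ) • v := (Nat.cast_smul_eq_nsmul ℝ n v).symm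
      _ ≤ (n : ℝ) • ((n : ℝ)⁻¹ • e) := smul_le_smul_of_nonneg_left (h _ (inv_pos.2 hn')) hn'.le
      _ = e := smul_inv_smul₀ hn'.ne' e
      _ ≤ |e| := le_abs_self e

lemma exists_isGreatest_smul_le (hX : ArchimedeanVL X) {e z : X} (he : 0 < e) (hz : 0 ≤ z) :
    ∃ t : ℝ, IsGreatest {s : ℝ | s • e ≤ z} t := by
  set S := {s : ℝ | s • e ≤ z}
  have h0 : (0 : ℝ) ∈ S := by simpa [S] using hz
  have hbdd : BddAbove S := by
    by_contra hS
    refine he.not_ge (hX e z fun n => ?_)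
    obtain ⟨s, hs, hns⟩ := not_bddAbove_iff.1 hS n
    rw [← Nat.cast_smul_eq_nsmul ℝ]
    exact (smul_le_smul_of_nonneg_right hns.le he.le).trans hs
  refine ⟨sSup S, ?_, fun s hs => le_csSup hbdd hs⟩
  refine sub_nonpos.1 (hX.le_zero_of_forall_le_smul (e := e) fun ε hε => ?_)
  obtain ⟨s, hs, hlt⟩ := exists_lt_of_lt_csSup ⟨0, h0⟩ (sub_lt_self (sSup S) hε)
  calc sSup S • e - z ≤ sSup S • e - s • e := sub_le_sub_left hs _
    _ = (sSup S - s) • e := (sub_smul _ _ _).symm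
    _ ≤ ε • e := smul_le_smul_of_nonneg_right (by linarith) he.le

/-- With `t` the largest coefficient such that `t • e ≤ z`, the remainder `r = z - t • e` is
comparable with each `ε • e`, and `ε • e ≤ r` would contradict the maximality of `t`. -/
lemma exists_eq_smul_of_le_isRieszAtom (hX : ArchimedeanVL X) {e z : X} (he : IsRieszAtom e)
    (hz : 0 ≤ z) (hze : z ≤ e) : ∃ t : ℝ, z = t • e := by
  obtain ⟨t, htz, htmax⟩ := hX.exists_isGreatest_smul_le he.1 hz
  have ht : 0 ≤ t := htmax (by simpa using hz)
  set r := z - t • e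
  have hr : 0 ≤ r := sub_nonneg.2 htz
  have hre : r ≤ e := (sub_le_self z (smul_nonneg ht he.1.le)).trans hze
  refine ⟨t, sub_eq_zero.1 (le_antisymm ?_ hr)⟩
  refine hX.le_zero_of_forall_le_smul (e := e) fun ε hε => ?_
  have hv : |r - ε • e| ≤ (1 + ε) • e := by
    calc |r - ε • e| ≤ |r| + |ε • e| := by simpa [sub_eq_add_neg] using abs_add_le r (-(ε • e))
      _ = r + ε • e := by rw [abs_of_nonneg hr, abs_of_nonneg (smul_nonneg hε.le he.1.le)]
      _ ≤ (1 + ε) • e := by rw [add_smul, one_smul]; exact add_le_add_left hre _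
  refine (he.nonneg_or_nonpos_of_abs_le (by positivity) hv).elim (fun hεr => ?_) sub_nonpos.1
  have : t + ε ≤ t := htmax <| by
    calc (t + ε) • e = t • e + ε • e := add_smul _ _ _
      _ ≤ t • e + r := add_le_add_right (sub_nonneg.1 hεr) _
      _ = z := add_sub_cancel _ _
  linarith

end ArchimedeanVL

section FiniteDimensional

variable {X : Type*} [AddCommGroup X] [Lattice X]

lemma exists_finset_isRieszAtom_maximal
    (hno : ¬ ∃ d : ℕ → X, (∀ k, 0 < d k) ∧ Pairwise fun i j => d i ⊓ d j = 0) :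
    ∃ M : Finset X, (∀ e ∈ M, IsRieszAtom e) ∧ (M : Set X).Pairwise (fun a b => a ⊓ b = 0) ∧
      ∀ y, 0 ≤ y → (∀ e ∈ M, y ⊓ e = 0) → y = 0 := by
  set 𝒜 : Set (Set X) := {S | (∀ e ∈ S, IsRieszAtom e) ∧ S.Pairwise (fun a b => a ⊓ b = 0)}
  obtain ⟨M, hM⟩ := zorn_subset 𝒜 fun c hc hchain =>
    ⟨⋃₀ c, ⟨fun e ⟨S, hS, heS⟩ => (hc hS).1 e heS,
      (Set.pairwise_sUnion hchain.directedOn).2 fun S hS => (hc hS).2⟩,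
      fun _ => Set.subset_sUnion_of_mem⟩
  have hfin : M.Finite := by
    by_contra hinf
    let f := Set.Infinite.natEmbedding M hinf
    exact hno ⟨fun k => f k, fun k => (hM.1.1 _ (f k).2).1,
      fun i j hij => hM.1.2 (f i).2 (f j).2 fun h => hij (f.injective (Subtype.ext h))⟩
  refine ⟨hfin.toFinset, by simpa using hM.1.1, by simpa using hM.1.2, fun y hy hyM => ?_⟩
  simp only [Set.Finite.mem_toFinset] at hyM
  by_contra hy0
  obtain ⟨e, he0, hey, he⟩ : ∃ e, 0 < e ∧ e ≤ y ∧ IsRieszAtom e := by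
    by_contra! h
    exact hno (exists_pairwise_inf_eq_zero_of_forall_not_isRieszAtom (hy.lt_of_ne' hy0) h)
  have heM (f : X) (hf : f ∈ M) : e ⊓ f = 0 :=
    le_antisymm (hyM f hf ▸ inf_le_inf_right f hey) (le_inf he0.le (hM.1.1 f hf).1.le)
  have hins : insert e M ∈ 𝒜 := by
    refine ⟨Set.forall_mem_insert.2 ⟨he, hM.1.1⟩, Set.pairwise_insert.2 ⟨hM.1.2, ?_⟩⟩
    exact fun f hf _ => ⟨heM f hf, inf_comm f e ▸ heM f hf⟩
  have hee : e ⊓ e = 0 := heM e (hM.2 hins (Set.subset_insert e M) (Set.mem_insert e M))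
  exact he0.ne' (inf_idem e ▸ hee)

variable [IsOrderedAddMonoid X] [Module ℝ X] [PosSMulMono ℝ X]

lemma mem_span_of_isRieszAtom_maximal (hX : ArchimedeanVL X) {M : Finset X}
    (hM : ∀ e ∈ M, IsRieszAtom e) (hMd : (M : Set X).Pairwise (fun a b => a ⊓ b = 0))
    (hmax : ∀ y, 0 ≤ y → (∀ e ∈ M, y ⊓ e = 0) → y = 0) {x : X} (hx : 0 ≤ x) :
    x ∈ Submodule.span ℝ (M : Set X) := by
  have hcoef (e : X) : ∃ t : ℝ, e ∈ M → IsGreatest {s : ℝ | s • e ≤ x} t := by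
    by_cases he : e ∈ M
    · exact (hX.exists_isGreatest_smul_le (hM e he).1 hx).imp fun _ ht _ => ht
    · exact ⟨0, fun h => absurd h he⟩
  choose t ht using hcoef
  have ht0 (e : X) (he : e ∈ M) : 0 ≤ t e := (ht e he).2 (by simpa using hx)
  have htx (e : X) (he : e ∈ M) : 0 ≤ t e • e := smul_nonneg (ht0 e he) (hM e he).1.le
  set y := x - ∑ e ∈ M, t e • e
  have hy : 0 ≤ y := sub_nonneg.2 <| Finset.sum_le_of_pairwise_inf_eq_zero hx htx
    (fun e he => (ht e he).1) fun e he f hf hef =>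
      smul_inf_smul_eq_zero (hM e he).1.le (hM f hf).1.le (hMd he hf hef) (ht0 e he) (ht0 f hf)
  have hyM (e : X) (he : e ∈ M) : y ⊓ e = 0 := by
    obtain ⟨σ, hσ⟩ := hX.exists_eq_smul_of_le_isRieszAtom (hM e he)
      (le_inf hy (hM e he).1.le) inf_le_right
    have hle : (t e + σ) • e ≤ x := by
      calc (t e + σ) • e = t e • e + y ⊓ e := by rw [add_smul, hσ]
        _ ≤ (∑ f ∈ M, t f • f) + y := add_le_add (Finset.single_le_sum htx he) inf_le_left
        _ = x := add_sub_cancel _ _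
    have hσ0 : σ ≤ 0 := by linarith [(ht e he).2 hle]
    exact le_antisymm (hσ ▸ smul_nonpos_of_nonpos_of_nonneg hσ0 (hM e he).1.le)
      (le_inf hy (hM e he).1.le)
  rw [sub_eq_zero.1 (hmax y hy hyM)]
  exact Submodule.sum_mem _ fun e he => Submodule.smul_mem _ _ (Submodule.subset_span he)

lemma ArchimedeanVL.exists_pairwise_inf_eq_zero_of_not_finiteDimensional
    (hX : ArchimedeanVL X) (hinf : ¬ FiniteDimensional ℝ X) :
    ∃ d : ℕ → X, (∀ k, 0 < d k) ∧ Pairwise fun i j => d i ⊓ d j = 0 := by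
  by_contra hno
  obtain ⟨M, hM, hMd, hmax⟩ := exists_finset_isRieszAtom_maximal hno
  have hmem {x : X} (hx : 0 ≤ x) := mem_span_of_isRieszAtom_maximal hX hM hMd hmax hx
  refine hinf ⟨⟨M, eq_top_iff.2 fun x _ => ?_⟩⟩
  rw [← posPart_sub_negPart x]
  exact Submodule.sub_mem _ (hmem (posPart_nonneg x)) (hmem (negPart_nonneg x))

end FiniteDimensional

section Net

variable {X : Type*} [AddCommGroup X] [Lattice X]

/-- The dominating net is `S` itself, ordered by `≥`. -/
lemma oConvergesTo_zero_of_isGLB {ι : Type*} [Preorder ι] {x : ι → X} {S : Set X}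
    (hS : S.Nonempty) (hSinf : InfClosed S) (hS0 : IsGLB S 0)
    (hx : ∀ v ∈ S, ∃ α₀, ∀ α, α₀ ≤ α → |x α| ≤ v) : OConvergesTo x 0 := by
  let y (γ : (↥S)ᵒᵈ) : X := (OrderDual.ofDual γ).1
  have hrange : Set.range y = S := by
    ext v
    simp [y]
  refine ⟨(↥S)ᵒᵈ, inferInstance, ⟨OrderDual.toDual ⟨_, hS.some_mem⟩⟩,
    ⟨fun v w => ⟨OrderDual.toDual ⟨_, hSinf (OrderDual.ofDual v).2 (OrderDual.ofDual w).2⟩,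
      inf_le_left, inf_le_right⟩⟩, y, fun _ _ h => h, hrange.symm ▸ hS0, fun γ => ?_⟩
  simpa using hx _ (OrderDual.ofDual γ).2

variable [IsOrderedAddMonoid X]

/-- If `c` lies below every tail upper bound, then removing one term at a time from the tail
bound `y - N • c` (the other terms are disjoint from it) shows `u k a ≤ y - (N + 1) • c`;
hence `N • c ≤ y` for every `N`. -/
lemma ArchimedeanVL.isGLB_tailUpperBounds (hX : ArchimedeanVL X) {α : Type*} [Nonempty α]
    {u : ℕ → α → X} {y : X} (hu : ∀ k a, 0 ≤ u k a) (huy : ∀ k a, u k a ≤ y)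
    (hdisj : ∀ k j, k ≠ j → ∀ a b, u k a ⊓ u j b = 0) :
    IsGLB {v | ∃ K, ∀ k, K ≤ k → ∀ a, u k a ≤ v} 0 := by
  obtain ⟨a₀⟩ := ‹Nonempty α›
  refine ⟨fun v ⟨K, hK⟩ => (hu K a₀).trans (hK K le_rfl a₀), fun c hc => ?_⟩
  have key (N : ℕ) : ∀ k a, u k a ≤ y - N • c := by
    induction N with
    | zero => simpa using huy
    | succ N ih =>
      intro j b
      have hmem : c ≤ y - N • c - u j b := hc ⟨j + 1, fun k hk a => le_sub_iff_add_le.2 <| by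
        rw [add_eq_sup_of_inf_eq_zero (hdisj k j (by omega) a b)]
        exact sup_le (ih k a) (ih j b)⟩
      rw [succ_nsmul, ← sub_sub]
      exact le_sub_comm.1 hmem
  exact hX c y fun N => (le_sub_comm.1 (key N 0 a₀)).trans (sub_le_self y (hu 0 a₀))

lemma ArchimedeanVL.not_eventuallyOrderBounded_nsmul (hX : ArchimedeanVL X) {d : ℕ → X}
    (hd : ∀ k, 0 < d k) : ¬ EventuallyOrderBounded (fun i : ℕ × ℕ => i.2 • d i.1) := by
  rintro ⟨⟨k, n₀⟩, b, hb⟩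
  refine (hd k).not_ge (hX (d k) (b - n₀ • d k) fun n => le_sub_iff_add_le.2 ?_)
  have := hb (k, n + n₀) ⟨le_rfl, Nat.le_add_left n₀ n⟩
  rwa [abs_of_nonneg (nsmul_nonneg (hd k).le _), add_nsmul] at this

variable [Module ℝ X] [PosSMulMono ℝ X]

lemma ArchimedeanVL.uoConvergesTo_zero_nsmul (hX : ArchimedeanVL X) {d : ℕ → X}
    (hd0 : ∀ k, 0 ≤ d k) (hd : Pairwise fun i j => d i ⊓ d j = 0) :
    UOConvergesTo (fun i : ℕ × ℕ => i.2 • d i.1) 0 := by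
  intro y hy
  set u : ℕ → ℕ → X := fun k n => n • d k ⊓ y
  have hu (k n : ℕ) : 0 ≤ u k n := le_inf (nsmul_nonneg (hd0 k) n) hy
  have hdisj (k j : ℕ) (hkj : k ≠ j) (n m : ℕ) : u k n ⊓ u j m = 0 := by
    refine le_antisymm ?_ (le_inf (hu k n) (hu j m))
    calc u k n ⊓ u j m ≤ n • d k ⊓ m • d j := inf_le_inf inf_le_left inf_le_left
      _ = 0 := by
        rw [← Nat.cast_smul_eq_nsmul ℝ n, ← Nat.cast_smul_eq_nsmul ℝ m]
        exact smul_inf_smul_eq_zero (hd0 k) (hd0 j) (hd hkj) n.cast_nonneg m.cast_nonneg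
  refine oConvergesTo_zero_of_isGLB (S := {v | ∃ K, ∀ k, K ≤ k → ∀ n, u k n ≤ v})
    ⟨y, 0, fun _ _ _ => inf_le_right⟩ ?_
    (hX.isGLB_tailUpperBounds hu (fun _ _ => inf_le_right) hdisj) ?_
  · rintro v ⟨K, hK⟩ w ⟨L, hL⟩
    exact ⟨max K L, fun k hk n => le_inf (hK k (le_of_max_le_left hk) n)
      (hL k (le_of_max_le_right hk) n)⟩
  · rintro v ⟨K, hK⟩
    refine ⟨(K, 0), fun ⟨k, n⟩ hkn => ?_⟩
    change |(|n • d k - 0|) ⊓ y| ≤ v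
    rw [sub_zero, abs_of_nonneg (nsmul_nonneg (hd0 k) n), abs_of_nonneg (hu k n)]
    exact hK k hkn.1 n

end Net

/-- In an infinite-dimensional Archimedean vector lattice there is a uo-null net which is
not eventually order bounded. -/
theorem exists_uoNull_net_not_eventuallyOrderBounded
    {X : Type u} [AddCommGroup X] [Lattice X]
    [CovariantClass X X (· + ·) (· ≤ ·)] [Module ℝ X] [PosSMulMono ℝ X]
    (hArch : ArchimedeanVL X) (hinf : ¬ FiniteDimensional ℝ X) :
    ∃ (ι : Type) (_ : Preorder ι) (_ : Nonempty ι),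
      IsDirected ι (· ≤ ·) ∧
      ∃ x : ι → X, UOConvergesTo x 0 ∧ ¬ EventuallyOrderBounded x := by
  have : IsOrderedAddMonoid X := { add_le_add_left := fun _ _ h c => add_le_add_left h c }
  obtain ⟨d, hd0, hd⟩ := hArch.exists_pairwise_inf_eq_zero_of_not_finiteDimensional hinf
  exact ⟨ℕ × ℕ, inferInstance, inferInstance, inferInstance, fun i => i.2 • d i.1,
    hArch.uoConvergesTo_zero_nsmul (fun k => (hd0 k).le) hd,
    hArch.not_eventuallyOrderBounded_nsmul hd0⟩
end

section
/- If X is a finite-dimensional Archimedean vector lattice, then every net in X that is uo-convergent to some element of X is eventually order bounded in X. -/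
open Filter Set

section StrongUnit

structure IsStrongUnit {α : Type*} [AddMonoid α] [Preorder α] (e : α) : Prop where
  nonneg : 0 ≤ e
  exists_le_nsmul : ∀ z : α, ∃ n : ℕ, z ≤ n • e

variable {α : Type*} [AddCommGroup α] [Lattice α] [IsOrderedAddMonoid α]

theorem inf_nsmul_eq_zero_of_inf_eq_zero {w u : α} (hw : 0 ≤ w) (hu : 0 ≤ u) (h : w ⊓ u = 0) :
    ∀ n : ℕ, w ⊓ n • u = 0
  | 0 => by rw [zero_smul, inf_eq_right.2 hw]
  | n + 1 => by
    have hstep : w ⊓ (n + 1) • u ≤ u := by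
      have := (le_abs_self _).trans (abs_inf_sub_inf_le_abs (n • u + u) (n • u) w)
      rwa [add_sub_cancel_left, abs_of_nonneg hu, inf_comm (n • u),
        inf_nsmul_eq_zero_of_inf_eq_zero hw hu h n, sub_zero, inf_comm, ← succ_nsmul] at this
    refine le_antisymm ?_ (le_inf hw (nsmul_nonneg hu _))
    exact h ▸ le_inf inf_le_left hstep

theorem le_of_inf_add_self_le {z u : α} (hu : IsStrongUnit u) (h : z ⊓ (u + u) ≤ u) : z ≤ u := by
  let : DistribLattice α := AddCommGroup.toDistribLattice α
  have hdisj : (z - u)⁺ ⊓ u = 0 := by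
    have : (z - u) ⊓ u ≤ 0 :=
      calc (z - u) ⊓ u = z ⊓ (u + u) - u := by rw [inf_sub, add_sub_cancel_right]
        _ ≤ 0 := sub_nonpos.2 h
    refine le_antisymm ?_ (le_inf (posPart_nonneg _) hu.nonneg)
    rw [posPart_def, inf_sup_right]
    exact sup_le this inf_le_left
  obtain ⟨n, hn⟩ := hu.exists_le_nsmul (z - u)⁺
  have := inf_nsmul_eq_zero_of_inf_eq_zero (posPart_nonneg _) hu.nonneg hdisj n
  rwa [inf_eq_left.2 hn, posPart_eq_zero, sub_nonpos] at this

end StrongUnit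

section OrderUnitNorm

variable {X : Type*} [AddCommGroup X] [Lattice X] [Module ℝ X]

theorem IsStrongUnit.exists_abs_le_smul {e : X} (he : IsStrongUnit e) (z : X) :
    ∃ c : ℝ, 0 ≤ c ∧ |z| ≤ c • e := by
  obtain ⟨n, hn⟩ := he.exists_le_nsmul |z|
  exact ⟨n, n.cast_nonneg, by rwa [Nat.cast_smul_eq_nsmul]⟩

noncomputable def orderUnitNorm (e z : X) : ℝ := sInf {c : ℝ | 0 ≤ c ∧ |z| ≤ c • e}

theorem orderUnitNorm_nonneg (e z : X) : 0 ≤ orderUnitNorm e z :=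
  Real.sInf_nonneg fun _ hc => hc.1

variable [PosSMulMono ℝ X]

theorem abs_smul_le (c : ℝ) (a : X) : |c • a| ≤ |c| • |a| := by
  have key : ∀ c : ℝ, 0 ≤ c → ∀ a : X, |c • a| ≤ c • |a| := fun c hc a =>
    abs_le'.2 ⟨smul_le_smul_of_nonneg_left (le_abs_self a) hc,
      smul_neg c a ▸ smul_le_smul_of_nonneg_left (neg_le_abs a) hc⟩
  rcases le_total 0 c with hc | hc
  · rw [abs_of_nonneg hc]
    exact key c hc a
  · simpa [abs_of_nonpos hc] using key (-c) (neg_nonneg.2 hc) a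

theorem ArchimedeanVL.nonpos_of_forall_le_smul (hArch : ArchimedeanVL X) {a e : X} (he : 0 ≤ e)
    (h : ∀ ε : ℝ, 0 < ε → a ≤ ε • e) : a ≤ 0 :=
  hArch a e fun n => by
    rcases n.eq_zero_or_pos with rfl | hn
    · simpa using he
    · have := smul_le_smul_of_nonneg_left (h (n : ℝ)⁻¹ (by positivity)) (n.cast_nonneg (α := ℝ))
      rwa [smul_inv_smul₀ (by positivity), Nat.cast_smul_eq_nsmul] at this

variable [IsOrderedAddMonoid X] {e : X}

theorem orderUnitNorm_le_iff (hArch : ArchimedeanVL X) (he : IsStrongUnit e) {z : X} {c : ℝ}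
    (hc : 0 ≤ c) : orderUnitNorm e z ≤ c ↔ |z| ≤ c • e := by
  refine ⟨fun h => ?_, fun h => csInf_le ⟨0, fun _ hd => hd.1⟩ ⟨hc, h⟩⟩
  rw [← sub_nonpos]
  refine hArch.nonpos_of_forall_le_smul he.nonneg fun ε hε => ?_
  obtain ⟨d, ⟨-, hd⟩, hdc⟩ :=
    exists_lt_of_csInf_lt (he.exists_abs_le_smul z) (h.trans_lt (lt_add_of_pos_right c hε))
  rw [sub_le_iff_le_add, ← add_smul, add_comm ε]
  exact hd.trans (smul_le_smul_of_nonneg_right hdc.le he.nonneg)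

theorem normedSpaceCore_orderUnitNorm (hArch : ArchimedeanVL X) (he : IsStrongUnit e) :
    letI : Norm X := ⟨orderUnitNorm e⟩
    NormedSpace.Core ℝ X := by
  let : Norm X := ⟨orderUnitNorm e⟩
  have hle : ∀ (z : X) {c : ℝ}, 0 ≤ c → (‖z‖ ≤ c ↔ |z| ≤ c • e) :=
    fun _ _ hc => orderUnitNorm_le_iff hArch he hc
  have habs (z : X) : |z| ≤ ‖z‖ • e := (hle z (orderUnitNorm_nonneg e z)).1 le_rfl
  have hsmul (c : ℝ) (z : X) : ‖c • z‖ ≤ |c| * ‖z‖ :=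
    (hle _ (mul_nonneg (abs_nonneg c) (orderUnitNorm_nonneg e z))).2 <|
      (abs_smul_le c z).trans <| by
        rw [mul_smul]
        exact smul_le_smul_of_nonneg_left (habs z) (abs_nonneg c)
  refine
    { norm_nonneg := orderUnitNorm_nonneg e
      norm_smul := fun c z => le_antisymm (hsmul c z) ?_
      norm_triangle := fun a b => (hle _ (add_nonneg (orderUnitNorm_nonneg e a)
        (orderUnitNorm_nonneg e b))).2 <| (abs_add_le a b).trans <| by
          rw [add_smul]
          exact add_le_add (habs a) (habs b)
      norm_eq_zero_iff := fun z => ⟨fun h => ?_, fun h => ?_⟩ }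
  · rcases eq_or_ne c 0 with rfl | hc
    · simpa using orderUnitNorm_nonneg e 0
    · have := hsmul c⁻¹ (c • z)
      rw [inv_smul_smul₀ hc, abs_inv, ← div_eq_inv_mul, le_div_iff₀ (abs_pos.2 hc)] at this
      rwa [Real.norm_eq_abs, mul_comm]
  · obtain ⟨hz, hnz⟩ := abs_le'.1 (by simpa using (hle z le_rfl).1 h.le)
    exact le_antisymm hz (neg_nonpos.1 hnz)
  · subst h
    exact le_antisymm ((hle 0 le_rfl).2 (by simp)) (orderUnitNorm_nonneg e 0)

end OrderUnitNorm

theorem Antitone.mapClusterPt_atTop_of_isGLB {α Γ : Type*} [TopologicalSpace α] [PartialOrder α]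
    [OrderClosedTopology α] [Preorder Γ] [IsDirectedOrder Γ] [Nonempty Γ] {g : Γ → α}
    (hg : Antitone g) {a : α} (ha : IsGLB (range g) a) {K : Set α} (hK : IsCompact K)
    (hgK : ∀ᶠ γ in atTop, g γ ∈ K) : MapClusterPt a atTop g := by
  obtain ⟨x, -, hx⟩ := hK.exists_mapClusterPt (le_principal_iff.2 hgK)
  have hxg (γ : Γ) : x ≤ g γ :=
    isClosed_Iic.mem_of_mapClusterPt hx ((eventually_ge_atTop γ).mono fun _ hδ => hg hδ)
  have hax : a ≤ x := isClosed_Ici.mem_of_mapClusterPt hx (.of_forall fun γ => ha.1 ⟨γ, rfl⟩)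
  rwa [le_antisymm (ha.2 (forall_mem_range.2 hxg)) hax] at hx

section FiniteDimensional

variable {X : Type*} [AddCommGroup X] [Lattice X] [IsOrderedAddMonoid X] [Module ℝ X]
  [PosSMulMono ℝ X] [FiniteDimensional ℝ X]

theorem exists_isStrongUnit : ∃ e : X, IsStrongUnit e := by
  obtain ⟨n, s, hs⟩ := Module.Finite.exists_fin (R := ℝ) (M := X)
  refine ⟨∑ i, |s i|, ⟨Finset.sum_nonneg fun i _ => abs_nonneg _, fun z => ?_⟩⟩
  obtain ⟨c, rfl⟩ :=
    (Submodule.mem_span_range_iff_exists_fun ℝ).1 (hs ▸ Submodule.mem_top (x := z))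
  obtain ⟨N, hN⟩ := exists_nat_ge (∑ i, |c i|)
  refine ⟨N, ?_⟩
  rw [← Nat.cast_smul_eq_nsmul ℝ, Finset.smul_sum]
  refine Finset.sum_le_sum fun i _ => ?_
  calc c i • s i ≤ |c i • s i| := le_abs_self _
    _ ≤ |c i| • |s i| := abs_smul_le _ _
    _ ≤ (N : ℝ) • |s i| := smul_le_smul_of_nonneg_right
        ((Finset.single_le_sum (fun j _ => abs_nonneg (c j)) (Finset.mem_univ i)).trans hN)
        (abs_nonneg _)

theorem exists_le_of_antitone_of_isGLB_zero (hArch : ArchimedeanVL X) {e : X}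
    (he : IsStrongUnit e) {Γ : Type*} [Preorder Γ] [IsDirectedOrder Γ] [Nonempty Γ] {g : Γ → X}
    (hg : Antitone g) (hglb : IsGLB (range g) 0) : ∃ γ, g γ ≤ e := by
  let : Norm X := ⟨orderUnitNorm e⟩
  have core := normedSpaceCore_orderUnitNorm hArch he
  let : NormedAddCommGroup X := .ofCore core
  let : NormedSpace ℝ X := .ofCore core
  have : ProperSpace X := FiniteDimensional.proper_real X
  have hle : ∀ (z : X) {c : ℝ}, 0 ≤ c → (‖z‖ ≤ c ↔ |z| ≤ c • e) :=
    fun _ _ hc => orderUnitNorm_le_iff hArch he hc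
  have hcone : IsClosed {z : X | 0 ≤ z} := by
    refine isClosed_of_closure_subset fun z hz => neg_nonpos.1 <|
      hArch.nonpos_of_forall_le_smul he.nonneg fun ε hε => ?_
    obtain ⟨w, hw, hzw⟩ := Metric.mem_closure_iff.1 hz ε hε
    calc -z ≤ w - z := by simpa using hw
      _ ≤ |w - z| := le_abs_self _
      _ ≤ ε • e := (hle _ hε.le).1 (by rw [← dist_eq_norm, dist_comm]; exact hzw.le)
  have : OrderClosedTopology X :=
    ⟨by simpa [sub_nonneg] using hcone.preimage (continuous_snd.sub continuous_fst)⟩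
  obtain ⟨γ₁⟩ := ‹Nonempty Γ›
  have hK : IsCompact (Icc 0 (g γ₁)) :=
    (isCompact_closedBall (0 : X) ‖g γ₁‖).of_isClosed_subset isClosed_Icc fun z hz => by
      rw [mem_closedBall_zero_iff, hle _ (norm_nonneg _), abs_of_nonneg hz.1]
      exact hz.2.trans ((le_abs_self _).trans ((hle _ (norm_nonneg _)).1 le_rfl))
  have h0 := hg.mapClusterPt_atTop_of_isGLB hglb hK
    ((eventually_ge_atTop γ₁).mono fun γ hγ => ⟨hglb.1 ⟨γ, rfl⟩, hg hγ⟩)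
  obtain ⟨γ, hγ⟩ := (h0.frequently (Metric.closedBall_mem_nhds 0 one_pos)).exists
  refine ⟨γ, (le_abs_self _).trans ?_⟩
  simpa using (hle _ zero_le_one).1 (mem_closedBall_zero_iff.1 hγ)

end FiniteDimensional

/-- In a finite-dimensional Archimedean vector lattice, every uo-convergent net is
eventually order bounded. -/
theorem uoConvergent_eventuallyOrderBounded_of_finiteDimensional
    {X : Type u} [AddCommGroup X] [Lattice X]
    [CovariantClass X X (· + ·) (· ≤ ·)] [Module ℝ X] [PosSMulMono ℝ X]
    (hArch : ArchimedeanVL X) (hfd : FiniteDimensional ℝ X) :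
    ∀ (ι : Type v) (_ : Preorder ι) (_ : Nonempty ι),
      IsDirected ι (· ≤ ·) →
      ∀ (x : ι → X) (l : X), UOConvergesTo x l → EventuallyOrderBounded x := by
  intro ι _ _ _ x l hx
  have : IsOrderedAddMonoid X := { add_le_add_left := fun _ _ h c => add_le_add_left h c }
  obtain ⟨u, hu⟩ := exists_isStrongUnit (X := X)
  have hu2 : 0 ≤ u + u := add_nonneg hu.nonneg hu.nonneg
  obtain ⟨Γ, _, _, _, g, hg, hglb, htail⟩ := hx (u + u) hu2
  obtain ⟨δ, hδ⟩ := exists_le_of_antitone_of_isGLB_zero hArch hu hg hglb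
  obtain ⟨α₀, hα₀⟩ := htail δ
  refine ⟨α₀, u + |l|, fun α hα => ?_⟩
  have hinf : |x α - l| ⊓ (u + u) ≤ u := by
    have := hα₀ α hα
    rw [sub_zero, abs_of_nonneg (le_inf (abs_nonneg _) hu2)] at this
    exact this.trans hδ
  calc |x α| = |x α - l + l| := by rw [sub_add_cancel]
    _ ≤ |x α - l| + |l| := abs_add_le _ _
    _ ≤ u + |l| := add_le_add_left (le_of_inf_add_self_le hu hinf) _
end
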